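/- Let f be the rank function of the Vámos matroid on E = {0,1,2,3,4,5,6,7}. Then for every nonempty finite set Z disjoint from E there is no polymatroid g on E ∪ Z that extends f and is an AK extension of f for the pair ({2,3,4,5}, {0,1}). (In particular, the Vámos matroid does not satisfy the Ahlswede–Körner property.) -/

import Mathlib

open Finset

/-- A polymatroid on a finite ground set `E`. -/
def IsPolymatroid {α : Type*} [DecidableEq α] (E : Finset α) (f : Finset α → ℝ) : Prop :=
  f ∅ = 0 ∧
  (∀ ⦃X Y : Finset α⦄, X ⊆ Y → Y ⊆ E → f X ≤ f Y) ∧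
  (∀ ⦃X Y : Finset α⦄, X ⊆ E → Y ⊆ E → f (X ∪ Y) + f (X ∩ Y) ≤ f X + f Y)

/-- Ahlswede–Körner extension condition for the pair `(X, Y)`. -/
def IsAKExtension {α : Type*} [DecidableEq α] (Z : Finset α) (g : Finset α → ℝ)
    (X Y : Finset α) : Prop :=
  g (Z ∪ X) = g X ∧ ∀ X' ⊆ X, g (X' ∪ Z) - g Z = g (X' ∪ Y) - g Y

/-- The circuit-hyperplanes of the Vámos matroid. -/
def vamosCH : Finset (Finset ℕ) :=
  {{0, 1, 2, 3}, {0, 1, 4, 5}, {2, 3, 6, 7}, {4, 5, 6, 7}, {2, 3, 4, 5}}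

/-- The rank function of the Vámos matroid on `{0, 1, …, 7}`:
`f(X) = |X|` if `|X| ≤ 3`, `f(X) = 3` if `X` is a circuit-hyperplane, and `f(X) = 4`
otherwise when `|X| ≥ 4`. -/
noncomputable def vamosRank (X : Finset ℕ) : ℝ :=
  if X ∈ vamosCH then 3 else min X.card 4

/-- The ground set of the Vámos matroid. -/
def vamosE : Finset ℕ := {0, 1, 2, 3, 4, 5, 6, 7}

/-!
An AK extension for `(X, Y) = ({2,3,4,5}, {0,1})` pins down `g Z = f X + f Y - f (X ∪ Y) = 1`
and `g (Z ∪ {2,3}) = g (Z ∪ {4,5}) = 2`. Submodularity against the circuit-hyperplanes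
`{0,1,2,3}, {0,1,4,5}` and `{2,3,6,7}, {4,5,6,7}` then forces `g (Z ∪ {0,1}) ≤ 2` and
`g (Z ∪ {6,7}) ≤ 2`, and one more application gives `g Z + f {0,1,6,7} ≤ 4`, i.e. `1 + 4 ≤ 4`.
-/

namespace IsPolymatroid

variable {α : Type*} [DecidableEq α] {E : Finset α} {g : Finset α → ℝ}

theorem mono (hg : IsPolymatroid E g) {X Y : Finset α} (hXY : X ⊆ Y) (hY : Y ⊆ E) :
    g X ≤ g Y :=
  hg.2.1 hXY hY

theorem union_add_inter_le (hg : IsPolymatroid E g) {X Y : Finset α} (hX : X ⊆ E)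
    (hY : Y ⊆ E) : g (X ∪ Y) + g (X ∩ Y) ≤ g X + g Y :=
  hg.2.2 hX hY

variable {Z A B C : Finset α}

theorem union_add_le_of_disjoint (hg : IsPolymatroid (E ∪ Z) g) (hZE : Disjoint Z E)
    (hA : A ⊆ E) (hC : C ⊆ E) :
    g (Z ∪ (A ∪ C)) + g A ≤ g (Z ∪ A) + g (A ∪ C) := by
  have hZC : Disjoint Z C := hZE.mono_right hC
  have key := hg.union_add_inter_le (X := Z ∪ A) (Y := A ∪ C)
    (union_subset subset_union_right (hA.trans subset_union_left))
    ((union_subset hA hC).trans subset_union_left)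
  have hunion : Z ∪ A ∪ (A ∪ C) = Z ∪ (A ∪ C) := by
    rw [union_assoc, ← union_assoc A, union_self]
  have hinter : (Z ∪ A) ∩ (A ∪ C) = A := by
    ext x
    have : x ∈ Z → x ∉ C := fun h => disjoint_left.mp hZC h
    simp only [mem_union, mem_inter]
    tauto
  rwa [hunion, hinter] at key

theorem union_add_le_of_disjoint_of_disjoint (hg : IsPolymatroid (E ∪ Z) g)
    (hZE : Disjoint Z E) (hABC : A ∪ B ∪ C ⊆ E) (hAB : Disjoint A B) :
    g (Z ∪ C) + g (A ∪ B ∪ C) + g A + g B ≤ g (Z ∪ A) + g (Z ∪ B) + g (A ∪ C) + g (B ∪ C) := by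
  have hA : A ⊆ E := subset_union_left.trans (subset_union_left.trans hABC)
  have hB : B ⊆ E := subset_union_right.trans (subset_union_left.trans hABC)
  have hC : C ⊆ E := subset_union_right.trans hABC
  have hZ_sub {S : Finset α} (hS : S ⊆ E) : Z ∪ S ⊆ E ∪ Z :=
    union_subset subset_union_right (hS.trans subset_union_left)
  have hAC := hg.union_add_le_of_disjoint hZE hA hC
  have hBC := hg.union_add_le_of_disjoint hZE hB hC
  have key := hg.union_add_inter_le (hZ_sub (union_subset hA hC)) (hZ_sub (union_subset hB hC))
  rw [← union_union_distrib_left, ← union_inter_distrib_left, union_union_union_comm, union_self,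
    ← inter_union_distrib_right, disjoint_iff_inter_eq_empty.mp hAB, empty_union] at key
  have hmono := hg.mono (subset_union_right (s₁ := Z)) (hZ_sub hABC)
  linarith

end IsPolymatroid


theorem IsAKExtension.apply_eq {α : Type*} [DecidableEq α] {Z X Y : Finset α}
    {g : Finset α → ℝ} (h : IsAKExtension Z g X Y) : g Z = g X + g Y - g (X ∪ Y) := by
  have := h.2 X subset_rfl
  rw [union_comm, h.1] at this
  linarith

theorem IsAKExtension.union_eq {α : Type*} [DecidableEq α] {Z X Y X' : Finset α}
    {g : Finset α → ℝ} (h : IsAKExtension Z g X Y) (hX' : X' ⊆ X) :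
    g (Z ∪ X') = g Z + g (X' ∪ Y) - g Y := by
  have := h.2 X' hX'
  rw [union_comm] at this
  linarith

theorem card_eq_four_of_mem_vamosCH {X : Finset ℕ} (h : X ∈ vamosCH) : X.card = 4 := by
  revert X h
  decide

theorem subset_vamosE_of_mem_vamosCH {X : Finset ℕ} (h : X ∈ vamosCH) : X ⊆ vamosE := by
  revert X h
  decide

theorem vamosRank_of_mem {X : Finset ℕ} (h : X ∈ vamosCH) : vamosRank X = 3 :=
  if_pos h

theorem vamosRank_of_card_le_three {X : Finset ℕ} (h : X.card ≤ 3) : vamosRank X = X.card := by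
  have hX : X ∉ vamosCH := fun hX => by have := card_eq_four_of_mem_vamosCH hX; omega
  rw [vamosRank, if_neg hX, min_eq_left (by exact_mod_cast h.trans (by norm_num))]

theorem vamosRank_of_not_mem {X : Finset ℕ} (h : X ∉ vamosCH) (h4 : 4 ≤ X.card) :
    vamosRank X = 4 := by
  rw [vamosRank, if_neg h, min_eq_right (by exact_mod_cast h4)]

section VamosExtension

variable {g : Finset ℕ → ℝ}

theorem eq_two_of_extends_vamos (hext : ∀ S ⊆ vamosE, g S = vamosRank S) {S : Finset ℕ}
    (hS : S ⊆ vamosE) (hcard : S.card = 2) : g S = 2 := by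
  rw [hext S hS, vamosRank_of_card_le_three (by omega), hcard]
  norm_num

theorem eq_three_of_extends_vamos (hext : ∀ S ⊆ vamosE, g S = vamosRank S) {S : Finset ℕ}
    (h : S ∈ vamosCH) : g S = 3 :=
  (hext S (subset_vamosE_of_mem_vamosCH h)).trans (vamosRank_of_mem h)

theorem eq_four_of_extends_vamos (hext : ∀ S ⊆ vamosE, g S = vamosRank S) {S : Finset ℕ}
    (hS : S ⊆ vamosE) (h : S ∉ vamosCH) (h4 : 4 ≤ S.card) : g S = 4 :=
  (hext S hS).trans (vamosRank_of_not_mem h h4)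

theorem vamos_akExtension_values {Z : Finset ℕ} (hext : ∀ S ⊆ vamosE, g S = vamosRank S)
    (hAK : IsAKExtension Z g {2, 3, 4, 5} {0, 1}) :
    g Z = 1 ∧ g (Z ∪ {2, 3}) = 2 ∧ g (Z ∪ {4, 5}) = 2 := by
  have h01 : g {0, 1} = 2 := eq_two_of_extends_vamos hext (by decide) rfl
  have hZ : g Z = 1 := by
    rw [hAK.apply_eq, eq_three_of_extends_vamos hext (S := {2, 3, 4, 5}) (by decide), h01,
      eq_four_of_extends_vamos hext (S := {2, 3, 4, 5} ∪ {0, 1}) (by decide) (by decide)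
        (by decide)]
    norm_num
  refine ⟨hZ, ?_, ?_⟩
  · rw [hAK.union_eq (by decide), hZ, h01,
      eq_three_of_extends_vamos hext (S := {2, 3} ∪ {0, 1}) (by decide)]
    norm_num
  · rw [hAK.union_eq (by decide), hZ, h01,
      eq_three_of_extends_vamos hext (S := {4, 5} ∪ {0, 1}) (by decide)]
    norm_num

end VamosExtension

/-- The Vámos matroid admits no AK extension for the pair `({2,3,4,5}, {0,1})`;
in particular it does not satisfy the Ahlswede–Körner property. -/
theorem stmt_8 :
    ∀ Z : Finset ℕ, Z.Nonempty → Disjoint Z vamosE →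
      ¬ ∃ g : Finset ℕ → ℝ, IsPolymatroid (vamosE ∪ Z) g ∧
        (∀ S ⊆ vamosE, g S = vamosRank S) ∧
        IsAKExtension Z g {2, 3, 4, 5} {0, 1} := by
  rintro Z - hZE ⟨g, hg, hext, hAK⟩
  obtain ⟨hZ, hZ23, hZ45⟩ := vamos_akExtension_values hext hAK
  have h23 : g {2, 3} = 2 := eq_two_of_extends_vamos hext (by decide) rfl
  have h45 : g {4, 5} = 2 := eq_two_of_extends_vamos hext (by decide) rfl
  have hZ01 : g (Z ∪ {0, 1}) ≤ 2 := by
    linarith [hg.union_add_le_of_disjoint_of_disjoint hZE (A := {2, 3}) (B := {4, 5})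
        (C := {0, 1}) (by decide) (by decide),
      eq_four_of_extends_vamos hext (S := {2, 3} ∪ {4, 5} ∪ {0, 1}) (by decide) (by decide)
        (by decide),
      eq_three_of_extends_vamos hext (S := {2, 3} ∪ {0, 1}) (by decide),
      eq_three_of_extends_vamos hext (S := {4, 5} ∪ {0, 1}) (by decide)]
  have hZ67 : g (Z ∪ {6, 7}) ≤ 2 := by
    linarith [hg.union_add_le_of_disjoint_of_disjoint hZE (A := {2, 3}) (B := {4, 5})
        (C := {6, 7}) (by decide) (by decide),
      eq_four_of_extends_vamos hext (S := {2, 3} ∪ {4, 5} ∪ {6, 7}) (by decide) (by decide)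
        (by decide),
      eq_three_of_extends_vamos hext (S := {2, 3} ∪ {6, 7}) (by decide),
      eq_three_of_extends_vamos hext (S := {4, 5} ∪ {6, 7}) (by decide)]
  have key := hg.union_add_le_of_disjoint_of_disjoint hZE (A := {0, 1}) (B := {6, 7}) (C := ∅)
    (by decide) (by decide)
  simp only [union_empty] at key
  linarith [eq_four_of_extends_vamos hext (S := {0, 1} ∪ {6, 7}) (by decide) (by decide)
    (by decide)]
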